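/- arXiv:2407.11623 — 4 statements merged into one kernel-verified Lean document; each statement's English description precedes it below -/
import Mathlib

section
/- For n ∈ ℕ, the element π_n := Σ_{Y ⊆ {2,…,n+1}} (-1)^{|Y|} [f_Y] is an idempotent in the monoid algebra k[FA(n+1, n+1)] of the monoid of all set maps from {1,…,n+1} to itself, where f_Y sends every element of Y to 1 and fixes all other elements. -/
open Finset

/-- The element `π_n = Σ_{Y ⊆ {2,…,n+1}} (-1)^{|Y|} [f_Y]` of the monoid algebra
`k[FA(n+1,n+1)]` of the monoid of all self-maps of a set with `n+1` elements, where `f_Y`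
sends every element of `Y` to the first element and fixes all other elements.
Here the set `{1,…,n+1}` is modelled by `Fin (n+1)`, whose first element is `0`. -/
noncomputable def piN (k : Type*) [Field k] (n : ℕ) :
    MonoidAlgebra k (Function.End (Fin (n + 1))) :=
  ∑ Y ∈ ((Finset.univ : Finset (Fin (n + 1))).erase 0).powerset,
    (-1 : k) ^ Y.card •
      MonoidAlgebra.single (fun i => if i ∈ Y then (0 : Fin (n + 1)) else i) 1

/-!
If `f` turns unions of finite sets into products, then `f Y = ∏_{a ∈ Y} f {a}` is a product of
commuting idempotents, so `Σ_{Y ⊆ s} (-1)^{|Y|} [f Y] = ∏_{a ∈ s} (1 - [f {a}])` is a product of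
commuting idempotents as well. The maps `f_Y` collapsing `Y` onto a point are such an `f`.
-/

namespace MonoidAlgebra

variable {α M R : Type*} [DecidableEq α] [Monoid M] [CommRing R]

noncomputable def alternatingPowersetSum (f : Finset α → M) (s : Finset α) : MonoidAlgebra R M :=
  ∑ Y ∈ s.powerset, (-1 : R) ^ Y.card • single (f Y) 1

variable {f : Finset α → M}

theorem commute_single_alternatingPowersetSum (hf : ∀ Y Z, f (Y ∪ Z) = f Y * f Z)
    (Z s : Finset α) :
    Commute (single (f Z) (1 : R)) (alternatingPowersetSum f s) := by
  refine Commute.sum_right _ _ _ fun Y _ => Commute.smul_right ?_ _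
  refine single_commute_single ?_ (Commute.one_left 1)
  rw [Commute, SemiconjBy, ← hf, ← hf, union_comm]

theorem alternatingPowersetSum_insert (hf : ∀ Y Z, f (Y ∪ Z) = f Y * f Z) {a : α}
    {s : Finset α} (ha : a ∉ s) :
    alternatingPowersetSum f (insert a s) =
      (1 - single (f {a}) 1) * (alternatingPowersetSum f s : MonoidAlgebra R M) := by
  have hdisj : Disjoint s.powerset (s.powerset.image (insert a)) := by
    refine disjoint_left.mpr fun Y _ hY => ?_
    obtain ⟨Z, -, rfl⟩ := mem_image.mp hY
    exact ha (mem_powerset.mp ‹_› (mem_insert_self a Z))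
  have hinj : Set.InjOn (insert a) (s.powerset : Set (Finset α)) := fun Y hY Z hZ h => by
    rw [← erase_insert fun h' => ha (mem_powerset.mp hY h'),
      ← erase_insert fun h' => ha (mem_powerset.mp hZ h'), h]
  have hterm : ∀ Y ∈ s.powerset, (-1 : R) ^ (insert a Y).card • single (f (insert a Y)) (1 : R) =
      -(single (f {a}) (1 : R) * ((-1 : R) ^ Y.card • single (f Y) (1 : R))) := fun Y hY => by
    rw [card_insert_of_notMem fun h' => ha (mem_powerset.mp hY h'), insert_eq, hf,
      mul_smul_comm, single_mul_single, mul_one, pow_succ, mul_neg_one, neg_smul]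
  rw [alternatingPowersetSum, powerset_insert, sum_union hdisj, sum_image hinj,
    sum_congr rfl hterm, sum_neg_distrib, ← mul_sum, ← sub_eq_add_neg, sub_mul, one_mul,
    alternatingPowersetSum]

theorem isIdempotentElem_alternatingPowersetSum (hf : ∀ Y Z, f (Y ∪ Z) = f Y * f Z)
    (s : Finset α) :
    IsIdempotentElem (alternatingPowersetSum f s : MonoidAlgebra R M) := by
  have hsingle : ∀ Y, IsIdempotentElem (single (f Y) (1 : R)) := fun Y => by
    rw [IsIdempotentElem, single_mul_single, ← hf, union_self, mul_one]
  induction s using Finset.induction_on with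
  | empty => simpa [alternatingPowersetSum] using hsingle ∅
  | insert a s ha ih =>
    rw [alternatingPowersetSum_insert hf ha]
    exact (hsingle {a}).one_sub.mul_of_commute
      ((Commute.one_left _).sub_left (commute_single_alternatingPowersetSum hf {a} s)) ih

end MonoidAlgebra

def collapseOnto {β : Type*} [DecidableEq β] (c : β) (Y : Finset β) : Function.End β :=
  fun i => if i ∈ Y then c else i

theorem collapseOnto_union {β : Type*} [DecidableEq β] (c : β) (Y Z : Finset β) :
    collapseOnto c (Y ∪ Z) = collapseOnto c Y * collapseOnto c Z := by
  funext x
  show _ = collapseOnto c Y (collapseOnto c Z x)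
  by_cases hZ : x ∈ Z <;> by_cases hY : x ∈ Y <;> simp [collapseOnto, hY, hZ]

/-- `π_n` is an idempotent in the monoid algebra `k[FA(n+1,n+1)]`. -/
theorem stmt2 (k : Type*) [Field k] (n : ℕ) : piN k n * piN k n = piN k n :=
  (MonoidAlgebra.isIdempotentElem_alternatingPowersetSum (collapseOnto_union 0) _).eq
end

section
/- Let k be a field and for finite sets S, T let FA(S,T) denote all functions S → T, FI(S,T) the injections, and FS(S,T) the surjections. Then the map k[FI(S,U)] ⊗ k[FS(T,S)] → k[FA(T,U)] induced by composition, summed over isomorphism classes of S (equivalently, factoring each map through its image), induces an isomorphism of k-vector spaces ⊕_{n∈ℕ} k[FI({1,…,n},U)] ⊗_{k[S_n]} k[FS(T,{1,…,n})] ≅ k[FA(T,U)], for all finite sets T, U. -/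
open Finsupp

/-- Index type: triples `(n, i, s)` of a natural number `n`, an injection
`i : Fin n ↪ U` and a surjection `s : T ↠ Fin n`. Its linearization models
`⊕ₙ k[FI({1,…,n},U)] ⊗ k[FS(T,{1,…,n})]`. -/
def FISPairs (T U : Type*) : Type _ :=
  Σ n : ℕ, (Fin n ↪ U) × {s : T → Fin n // Function.Surjective s}

/-- The linear map `⊕ₙ k[FI({1,…,n},U)] ⊗ k[FS(T,{1,…,n})] → k[FA(T,U)]` induced by
composition `(i, s) ↦ i ∘ s`. -/
noncomputable def composePairs (k : Type*) [Field k] (T U : Type*) :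
    (FISPairs T U →₀ k) →ₗ[k] ((T → U) →₀ k) :=
  Finsupp.lift ((T → U) →₀ k) k (FISPairs T U)
    (fun p => Finsupp.single (fun t => p.2.1 (p.2.2.1 t)) 1)

/-- The relations defining the tensor product over the group algebras `k[S_n]`:
`(i ∘ σ) ⊗ s = i ⊗ (σ ∘ s)` for `σ ∈ S_n`. -/
def tensorRels (k : Type*) [Field k] (T U : Type*) : Set (FISPairs T U →₀ k) :=
  { v | ∃ (n : ℕ) (σ : Equiv.Perm (Fin n)) (i : Fin n ↪ U)
          (s : {s : T → Fin n // Function.Surjective s}),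
        v = Finsupp.single (⟨n, σ.toEmbedding.trans i, s⟩ : FISPairs T U) 1
          - Finsupp.single (⟨n, i, ⟨σ ∘ s.1, σ.surjective.comp s.2⟩⟩ : FISPairs T U) 1 }

/-!
A map `T → U` factors as a surjection onto `Fin n` followed by an injection, by factoring
through its image, so `composePairs` is `Finsupp.lmapDomain` of a surjection. The kernel of
`lmapDomain f` is spanned by the differences of basis vectors lying in one fibre of `f`, and two
factorizations `(i, s)`, `(j, t)` of the same map have the same image, so `n = m` and they differ
by the permutation `σ` with `j ∘ σ = i`: the fibre relations are exactly the `S_n`-relations.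
-/

theorem Finsupp.ker_lmapDomain_eq_span {α β R : Type*} [Ring R] (f : α → β) :
    LinearMap.ker (lmapDomain R R f) =
      Submodule.span R {v | ∃ a b, f a = f b ∧ v = single a 1 - single b 1} := by
  set N := Submodule.span R {v | ∃ a b, f a = f b ∧ v = single a (1 : R) - single b 1}
  refine le_antisymm (fun x hx => ?_) (Submodule.span_le.2 ?_)
  · rcases isEmpty_or_nonempty α with hα | hα
    · simp [Subsingleton.elim x 0]
    -- `invFun f ∘ f` preserves the fibres of `f` and kills `x`, as it factors through `f`.
    have hsub : ∀ v : α →₀ R, v - mapDomain (Function.invFun f ∘ f) v ∈ N := by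
      intro v
      induction v using Finsupp.induction_linear with
      | zero => simp
      | add v w hv hw => simpa [mapDomain_add, add_sub_add_comm] using N.add_mem hv hw
      | single a c =>
        rw [mapDomain_single, Function.comp_apply, ← smul_single_one,
          ← smul_single_one (Function.invFun f (f a)), ← smul_sub]
        exact N.smul_mem c (Submodule.subset_span
          ⟨a, _, (Function.invFun_eq ⟨a, rfl⟩).symm, rfl⟩)
    have hx0 : mapDomain f x = 0 := hx
    simpa [mapDomain_comp, hx0] using hsub x
  · rintro _ ⟨a, b, hab, rfl⟩
    rw [SetLike.mem_coe, LinearMap.mem_ker, map_sub, lmapDomain_apply, lmapDomain_apply,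
      mapDomain_single, mapDomain_single, hab, sub_self]

theorem Function.Embedding.exists_equiv_of_range_eq {α β U : Type*} (i : α ↪ U) (j : β ↪ U)
    (h : Set.range i = Set.range j) : ∃ e : α ≃ β, ∀ x, j (e x) = i x :=
  ⟨(Equiv.ofInjective i i.injective).trans
      ((Equiv.setCongr h).trans (Equiv.ofInjective j j.injective).symm),
    fun x => by simp [Equiv.apply_ofInjective_symm]⟩

section

variable {T U : Type*}

namespace FISPairs

def compose (p : FISPairs T U) : T → U := p.2.1 ∘ p.2.2.1

theorem compose_surjective [Finite T] : Function.Surjective (compose : FISPairs T U → T → U) := by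
  intro f
  have : Finite (Set.range f) := Set.finite_range f
  let e := Finite.equivFin (Set.range f)
  refine ⟨⟨_, e.symm.toEmbedding.trans (Function.Embedding.subtype _),
    ⟨e ∘ Set.rangeFactorization f, e.surjective.comp Set.rangeFactorization_surjective⟩⟩, ?_⟩
  funext t
  exact congrArg Subtype.val (e.symm_apply_apply _)

theorem single_sub_single_mem_tensorRels (k : Type*) [Field k] {p q : FISPairs T U}
    (h : p.compose = q.compose) : single p (1 : k) - single q 1 ∈ tensorRels k T U := by
  obtain ⟨n, i, s⟩ := p
  obtain ⟨m, j, t⟩ := q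
  have hrange : Set.range i = Set.range j := by
    rw [← s.2.range_comp, ← t.2.range_comp]
    exact congrArg Set.range h
  obtain ⟨σ, hσ⟩ := i.exists_equiv_of_range_eq j hrange
  obtain rfl : n = m := Fin.equiv_iff_eq.mp ⟨σ⟩
  have hi : σ.toEmbedding.trans j = i := Function.Embedding.ext hσ
  have ht : (⟨σ ∘ s.1, σ.surjective.comp s.2⟩ : {s : T → Fin n // Function.Surjective s}) = t :=
    Subtype.ext <| funext fun x => j.injective <| by
      change j (σ (s.1 x)) = j (t.1 x)
      rw [hσ]
      exact congrFun h x
  exact ⟨n, σ, j, s, by rw [hi, ht]; rfl⟩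

end FISPairs

theorem tensorRels_eq (k : Type*) [Field k] :
    tensorRels k T U =
      {v | ∃ p q : FISPairs T U, p.compose = q.compose ∧ v = single p 1 - single q 1} := by
  ext v
  constructor
  · rintro ⟨n, σ, i, s, rfl⟩
    exact ⟨⟨n, σ.toEmbedding.trans i, s⟩, ⟨n, i, ⟨σ ∘ s.1, σ.surjective.comp s.2⟩⟩, rfl, rfl⟩
  · rintro ⟨p, q, h, rfl⟩
    exact FISPairs.single_sub_single_mem_tensorRels k h

theorem composePairs_eq_lmapDomain (k : Type*) [Field k] :
    composePairs k T U = lmapDomain k k FISPairs.compose := by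
  ext p : 2
  simp [composePairs, FISPairs.compose, Function.comp_def]

end

theorem stmt5_general (k : Type*) [Field k] (T U : Type*) [Fintype T] :
    Function.Surjective (composePairs k T U) ∧
      LinearMap.ker (composePairs k T U) = Submodule.span k (tensorRels k T U) := by
  rw [composePairs_eq_lmapDomain, tensorRels_eq, ← ker_lmapDomain_eq_span]
  exact ⟨mapDomain_surjective FISPairs.compose_surjective, rfl⟩

/-- Factoring each map through its image induces an isomorphism of `k`-vector spaces
`⊕ₙ k[FI({1,…,n},U)] ⊗_{k[Sₙ]} k[FS(T,{1,…,n})] ≅ k[FA(T,U)]`: the composition map is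
surjective, and its kernel is exactly the span of the `S_n`-tensor relations, so that the
induced map on the quotient (the direct sum of the tensor products over the group algebras)
is an isomorphism. -/
theorem stmt5 (k : Type*) [Field k] (T U : Type*) [Fintype T] [Fintype U] :
    Function.Surjective (composePairs k T U) ∧
      LinearMap.ker (composePairs k T U) = Submodule.span k (tensorRels k T U) :=
  stmt5_general k T U
end

section
/- Let k be a field, t, s ∈ ℕ with s ≤ t. Viewing k[FI({1,…,s},{1,…,t})] (the linearization of the set of injections) as a (S_t, S_s)-bimodule via post- and pre-composition, the coinvariants sgn_t ⊗_{k[S_t]} k[FI({1,…,s},{1,…,t})] are isomorphic as right k[S_s]-modules to sgn_s if s ∈ {t-1, t}, and are zero if s < t-1. -/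
/-- The sign-twisted coinvariants `sgn_t ⊗_{k[S_t]} k[FI({1,…,s},{1,…,t})]`, modelled as the
quotient of the linearization of the set of injections `Fin s ↪ Fin t` by the relations
`[σ ∘ i] = sign(σ) · [i]` for `σ ∈ S_t`. -/
noncomputable def sgnCoinvRels (k : Type*) [Field k] (s t : ℕ) : Submodule k ((Fin s ↪ Fin t) →₀ k) :=
  Submodule.span k
    {v : (Fin s ↪ Fin t) →₀ k | ∃ (σ : Equiv.Perm (Fin t)) (i : Fin s ↪ Fin t),
      v = Finsupp.single (i.trans σ.toEmbedding) 1
        - ((Equiv.Perm.sign σ : ℤ) : k) • Finsupp.single i 1}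

/-!
`S_t` acts transitively on the injections `Fin s ↪ Fin t`, so the twisted coinvariants are spanned
by the class of the standard inclusion `ι`. If `s + 1 < t`, a transposition of two points outside
the image of `ι` fixes `ι` but has sign `-1`, so `[ι] = -[ι]` and everything vanishes in
characteristic `≠ 2`. If `t ≤ s + 1`, a permutation fixing the image of `ι` fixes all but at most
one point, hence is the identity; the action is then simply transitive and `[σ • ι] ↦ sign σ` is a
well-defined isomorphism onto `k`. Precomposition by `τ ∈ S_s` is postcomposition by an extension
of `τ` to `S_t`, which has the same sign.
-/

open Equiv Finsupp MulAction

noncomputable section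

section TwistedCoinvariants

variable {k G : Type*} [Field k] [Group G] (X : Type*) [MulAction G X] (χ : G →* k)

/-- The quotient by these relations is the `χ`-twisted coinvariants `k_χ ⊗_{k[G]} k[X]`. -/
def twistedCoinvRels : Submodule k (X →₀ k) :=
  Submodule.span k {v | ∃ (g : G) (x : X), v = single (g • x) 1 - χ g • single x 1}

variable {X}

theorem mk_single_smul_twistedCoinvRels (g : G) (x : X) :
    (Submodule.Quotient.mk (single (g • x) 1) : (X →₀ k) ⧸ twistedCoinvRels X χ)
      = χ g • Submodule.Quotient.mk (single x 1) := by
  rw [← Submodule.Quotient.mk_smul, Submodule.Quotient.eq]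
  exact Submodule.subset_span ⟨g, x, rfl⟩

theorem exists_eq_smul_mk_single_twistedCoinvRels [IsPretransitive G X] (x₀ : X)
    (v : (X →₀ k) ⧸ twistedCoinvRels X χ) :
    ∃ a : k, v = a • Submodule.Quotient.mk (single x₀ 1) := by
  obtain ⟨f, rfl⟩ := Submodule.Quotient.mk_surjective _ v
  induction f using Finsupp.induction_linear with
  | zero => exact ⟨0, by simp⟩
  | add f f' hf hf' =>
    obtain ⟨a, ha⟩ := hf
    obtain ⟨a', ha'⟩ := hf'
    exact ⟨a + a', by rw [Submodule.Quotient.mk_add, ha, ha', add_smul]⟩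
  | single x b =>
    obtain ⟨g, rfl⟩ := exists_smul_eq G x₀ x
    refine ⟨b * χ g, ?_⟩
    rw [← smul_single_one, Submodule.Quotient.mk_smul, mk_single_smul_twistedCoinvRels,
      smul_smul]

theorem subsingleton_quotient_twistedCoinvRels_of_smul_eq [IsPretransitive G X] {g : G} {x₀ : X}
    (hg : g • x₀ = x₀) (hχ : χ g ≠ 1) : Subsingleton ((X →₀ k) ⧸ twistedCoinvRels X χ) := by
  have hzero : (Submodule.Quotient.mk (single x₀ 1) : (X →₀ k) ⧸ twistedCoinvRels X χ) = 0 := by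
    have hfix := mk_single_smul_twistedCoinvRels χ g x₀
    rw [hg] at hfix
    have hkill : (1 - χ g) • (Submodule.Quotient.mk (single x₀ 1) :
        (X →₀ k) ⧸ twistedCoinvRels X χ) = 0 := by
      rw [sub_smul, one_smul, ← hfix, sub_self]
    exact (smul_eq_zero.1 hkill).resolve_left (sub_ne_zero.2 hχ.symm)
  refine subsingleton_of_forall_eq 0 fun v => ?_
  obtain ⟨a, rfl⟩ := exists_eq_smul_mk_single_twistedCoinvRels χ x₀ v
  rw [hzero, smul_zero]

theorem nonempty_quotient_twistedCoinvRels_equiv_of_free [IsPretransitive G X] (x₀ : X)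
    (hfree : ∀ g : G, g • x₀ = x₀ → g = 1) :
    Nonempty (((X →₀ k) ⧸ twistedCoinvRels X χ) ≃ₗ[k] k) := by
  have hinj : ∀ g h : G, g • x₀ = h • x₀ → g = h := fun g h hgh => by
    have := hfree (h⁻¹ * g) (by rw [mul_smul, hgh, inv_smul_smul])
    exact (inv_mul_eq_one.1 this).symm
  choose γ hγ using exists_smul_eq G x₀
  have hγ_smul : ∀ g x, γ (g • x) = g * γ x := fun g x =>
    hinj _ _ (by rw [hγ, mul_smul, hγ])
  have hγ_base : γ x₀ = 1 := hinj _ _ (by rw [hγ, one_smul])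
  let φ : (X →₀ k) →ₗ[k] k := linearCombination k (fun x => χ (γ x))
  have hker : twistedCoinvRels X χ ≤ LinearMap.ker φ := by
    rw [twistedCoinvRels, Submodule.span_le]
    rintro _ ⟨g, x, rfl⟩
    simp [φ, hγ_smul]
  let e := (twistedCoinvRels X χ).liftQ φ hker
  have he : e (Submodule.Quotient.mk (single x₀ 1)) = 1 := by simp [e, φ, hγ_base]
  refine ⟨LinearEquiv.ofBijective e ⟨fun w w' hww' => ?_,
    fun a => ⟨a • Submodule.Quotient.mk (single x₀ 1), by simp [he]⟩⟩⟩
  obtain ⟨a, rfl⟩ := exists_eq_smul_mk_single_twistedCoinvRels χ x₀ w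
  obtain ⟨a', rfl⟩ := exists_eq_smul_mk_single_twistedCoinvRels χ x₀ w'
  have haa' : a = a' := by simpa only [map_smul, he, smul_eq_mul, mul_one] using hww'
  rw [haa']

end TwistedCoinvariants

namespace Equiv.Perm

theorem viaFintypeEmbedding_smul {α β : Type*} [Fintype α] [DecidableEq α] [DecidableEq β]
    (τ : Perm α) (i : α ↪ β) : τ.viaFintypeEmbedding i • i = τ.toEmbedding.trans i :=
  Function.Embedding.ext fun a => viaFintypeEmbedding_apply_image τ i a

variable {α β : Type*} [Fintype α] [Fintype β] [DecidableEq β]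

def signChar (k : Type*) [Ring k] : Perm β →* k :=
  (Int.castRingHom k).toMonoidHom.comp ((Units.coeHom ℤ).comp sign)

@[simp]
theorem signChar_apply (k : Type*) [Ring k] (σ : Perm β) : signChar k σ = ((sign σ : ℤ) : k) :=
  rfl

theorem eq_one_of_smul_embedding_eq (hcard : Fintype.card β ≤ Fintype.card α + 1)
    {σ : Perm β} {i : α ↪ β} (h : σ • i = i) : σ = 1 := by
  by_contra hσ
  have hsupp : σ.support ⊆ (Finset.univ.map i)ᶜ := by
    intro x hx
    rw [Finset.mem_compl, Finset.mem_map]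
    rintro ⟨a, -, rfl⟩
    exact mem_support.1 hx (congrArg (· a) h)
  have := (two_le_card_support_of_ne_one hσ).trans (Finset.card_le_card hsupp)
  rw [Finset.card_compl, Finset.card_map, Finset.card_univ] at this
  omega

theorem exists_swap_smul_embedding_eq (hcard : Fintype.card α + 2 ≤ Fintype.card β)
    (i : α ↪ β) : ∃ x y : β, x ≠ y ∧ swap x y • i = i := by
  have hcompl : 1 < (Finset.univ.map i)ᶜ.card := by
    rw [Finset.card_compl, Finset.card_map, Finset.card_univ]
    omega
  obtain ⟨x, hx, y, hy, hxy⟩ := Finset.one_lt_card.1 hcompl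
  refine ⟨x, y, hxy, Function.Embedding.ext fun a => swap_apply_of_ne_of_ne ?_ ?_⟩
  · rintro rfl
    simp at hx
  · rintro rfl
    simp at hy

end Equiv.Perm

theorem sgnCoinvRels_eq_twistedCoinvRels (k : Type*) [Field k] (s t : ℕ) :
    sgnCoinvRels k s t =
      twistedCoinvRels (Fin s ↪ Fin t) (Perm.signChar k : Perm (Fin t) →* k) :=
  rfl

end

/-- For `s ≤ t`, the coinvariants `sgn_t ⊗_{k[S_t]} k[FI({1,…,s},{1,…,t})]` vanish when
`s < t - 1`, and when `s ∈ {t-1, t}` they are isomorphic, as right `k[S_s]`-modules, to the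
sign representation `sgn_s`: the right action of `τ ∈ S_s` (by precomposition) corresponds
to multiplication by `sign τ`. -/
theorem stmt8 (k : Type*) [Field k] [CharZero k] (s t : ℕ) (hst : s ≤ t) :
    (s + 1 < t → Subsingleton (((Fin s ↪ Fin t) →₀ k) ⧸ sgnCoinvRels k s t)) ∧
      ((s = t - 1 ∨ s = t) →
        ∃ e : (((Fin s ↪ Fin t) →₀ k) ⧸ sgnCoinvRels k s t) ≃ₗ[k] k,
          ∀ (τ : Equiv.Perm (Fin s)) (i : Fin s ↪ Fin t),
            e (Submodule.Quotient.mk (Finsupp.single (τ.toEmbedding.trans i) 1))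
              = ((Equiv.Perm.sign τ : ℤ) : k)
                * e (Submodule.Quotient.mk (Finsupp.single i 1))) := by
  have := Perm.isMultiplyPretransitive (Fin t) s
  rw [sgnCoinvRels_eq_twistedCoinvRels]
  refine ⟨fun hlt => ?_, fun hcase => ?_⟩
  · obtain ⟨x, y, hxy, hswap⟩ := Perm.exists_swap_smul_embedding_eq
      (by simp only [Fintype.card_fin]; omega) (Fin.castLEEmb hst)
    refine subsingleton_quotient_twistedCoinvRels_of_smul_eq _ hswap ?_
    rw [Perm.signChar_apply, Perm.sign_swap hxy]
    norm_num
  · obtain ⟨e⟩ := nonempty_quotient_twistedCoinvRels_equiv_of_free (Perm.signChar k)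
      (Fin.castLEEmb hst) fun σ =>
        Perm.eq_one_of_smul_embedding_eq (by simp only [Fintype.card_fin]; omega)
    refine ⟨e, fun τ i => ?_⟩
    rw [← Perm.viaFintypeEmbedding_smul, mk_single_smul_twistedCoinvRels, map_smul,
      smul_eq_mul, Perm.signChar_apply, Perm.viaFintypeEmbedding_sign]
end

section
/- Let k be a field of characteristic zero and n ≥ 1. The k[S_{n+1}]-module k[FS({1,…,n+1},{1,…,n})] of surjections, with S_{n+1} acting by precomposition, does not contain the sign representation sgn_{n+1} as a constituent. -/
/-! A surjection `Fin (n + 1) → Fin n` identifies two points `i ≠ j`, so it is fixed by the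
transposition `(i j)`. A sign-isotypic vector `v` satisfies `(i j) · v = -v`; reading off the
coefficient at the fixed surjection `f` gives `v f = -v f`, hence `v f = 0` in characteristic
zero. -/

open Function

theorem Function.comp_swap_of_apply_eq {α β : Type*} [DecidableEq α] {f : α → β} {i j : α}
    (h : f i = f j) : f ∘ Equiv.swap i j = f := by
  funext x
  rw [comp_apply, Equiv.swap_apply_def]
  split_ifs with hxi hxj
  · rw [hxi, h]
  · rw [hxj, h]
  · rfl

theorem Function.injective_surjective_comp_perm {α β : Type*} (σ : Equiv.Perm α) :
    Injective (fun s : {f : α → β // Surjective f} =>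
      (⟨s.1 ∘ σ, s.2.comp σ.surjective⟩ : {f : α → β // Surjective f})) :=
  fun _ _ hab => Subtype.ext (σ.surjective.injective_comp_right (congrArg Subtype.val hab))

theorem Finsupp.apply_eq_zero_of_mapDomain_eq_neg {α M : Type*} [AddCommGroup M]
    [IsAddTorsionFree M] {g : α → α} (hg : Injective g) {v : α →₀ M}
    (hv : mapDomain g v = -v) {a : α} (ha : g a = a) : v a = 0 := by
  have hva : -v a = v a := by
    rw [← neg_apply, ← hv, ← mapDomain_apply hg v a, ha]
  exact self_eq_neg.mp hva.symm

theorem stmt12_general (k : Type*) [Field k] [CharZero k] (n : ℕ) :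
    ∀ v : {f : Fin (n + 1) → Fin n // Function.Surjective f} →₀ k,
      (∀ σ : Equiv.Perm (Fin (n + 1)),
          Finsupp.mapDomain
              (fun s : {f : Fin (n + 1) → Fin n // Function.Surjective f} =>
                (⟨s.1 ∘ ⇑σ⁻¹, s.2.comp (σ⁻¹).surjective⟩ :
                  {f : Fin (n + 1) → Fin n // Function.Surjective f})) v
            = ((Equiv.Perm.sign σ : ℤ) : k) • v) →
        v = 0 := by
  intro v hv
  ext ⟨f, hf⟩
  obtain ⟨i, j, hij, hfij⟩ := Fintype.exists_ne_map_eq_of_card_lt f (by simp)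
  refine Finsupp.apply_eq_zero_of_mapDomain_eq_neg
    (injective_surjective_comp_perm (Equiv.swap i j)⁻¹) ?_ (Subtype.ext ?_)
  · rw [hv, Equiv.Perm.sign_swap hij]
    simp
  · rw [Equiv.swap_inv]
    exact comp_swap_of_apply_eq hfij

/-- Over a field `k` of characteristic zero and for `n ≥ 1`, the `k[S_{n+1}]`-module
`k[FS({1,…,n+1},{1,…,n})]` of surjections, with `S_{n+1}` acting by precomposition
`σ · [f] = [f ∘ σ⁻¹]`, does not contain the sign representation: any vector on which every
`σ` acts by the scalar `sign σ` is zero. -/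
theorem stmt12 (k : Type*) [Field k] [CharZero k] (n : ℕ) (hn : 1 ≤ n) :
    ∀ v : {f : Fin (n + 1) → Fin n // Function.Surjective f} →₀ k,
      (∀ σ : Equiv.Perm (Fin (n + 1)),
          Finsupp.mapDomain
              (fun s : {f : Fin (n + 1) → Fin n // Function.Surjective f} =>
                (⟨s.1 ∘ ⇑σ⁻¹, s.2.comp (σ⁻¹).surjective⟩ :
                  {f : Fin (n + 1) → Fin n // Function.Surjective f})) v
            = ((Equiv.Perm.sign σ : ℤ) : k) • v) →
        v = 0 :=
  stmt12_general k n
end
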